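/- Fix integers n ≥ 2 and k ≥ 3; set γ_k := 1/2 − 1/k, μ_k := k/2 − 1. Let η : ℝ → [0,1] be a smooth even cutoff with η ≡ 1 on [−1,1] and η ≡ 0 outside (−6/5, 6/5). Fix constants P ≥ 1 and Ĉ₀, C₋, C₊, C₋′, C₊′ > 0. Then there exist a constant C₂ and a time τ₁₀, depending only on n, k, η, P and the fixed constants, such that the following holds for every τ ≥ τ₁₀. Let v be a C² function of σ on |σ| ≤ (6/5)e^{γ_k τ/5} (extended by 0 outside) satisfying: (i) |N_loc(σ) − n v′(σ) I(σ)| ≤ Ĉ₀ e^{−(3/2)μ_k τ} for |σ| ≤ P; (ii) 1 + v(σ) ≥ 1/2, C₋|σ|^k ≤ e^{μ_k τ}|v(σ)| ≤ C₊|σ|^k, and C₋′|σ|^{k−1} ≤ e^{μ_k τ}|v′(σ)| ≤ C₊′|σ|^{k−1} for P ≤ |σ| ≤ (6/5)e^{γ_k τ/5}, where N_loc(σ) := (2(n−1)v′(σ)² − v(σ)²)/(2(1+v(σ))) and I(σ) := ∫₀^σ v″(s)/(1+v(s)) ds. Then, writing η_τ(σ) := η(e^{−γ_k τ/5} σ)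 and G(σ) := η_τ(σ)(N_loc(σ) − n v′(σ) I(σ)) + ((∂_τ η_τ)(σ) − η_τ″(σ) + (σ/2) η_τ′(σ)) v(σ) − 2 η_τ′(σ) v′(σ), one has (∫_ℝ G(σ)² e^{−σ²/4} dσ)^{1/2} ≤ C₂ e^{−(3/2)μ_k τ}. -/

import Mathlib

/-!
Write `ε = e^{-μ_k τ/2}`, so that (ii) reads `|v| ≲ |σ|^k ε²`, `|v'| ≍ |σ|^{k-1} ε²`; the
claim then follows from the pointwise bound `|G(σ)| ≲ ε³ e^{σ²/16}`, which the Gaussian weight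
integrates.
Where `η_τ ≡ 1` we have `G = N_loc - n v' I`. On `|σ| ≤ P` this is (i). For `|σ| ≥ P`, evaluate
(i) at `σ = ±P`: since `|v'(±P)| ≳ ε²` it gives `|I(±P)| ≲ ε`. The substitution `w = v'/(1+v)`
turns `v''/(1+v)` into `w' + w²`, so `I` grows from `±P` to `σ` by at most a polynomial in `|σ|`
times `ε²`, and `|N_loc - n v' I| ≲ |σ|^{4k} ε³`. The derivatives of `η_τ` live on
`e^{γ_k τ/5} ≤ |σ| ≤ (6/5) e^{γ_k τ/5}`, where those terms are only `O(|σ|^{k+1} ε²)`; but there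
`σ² ≥ e^{2γ_k τ/5} ≥ 16 μ_k τ` for large `τ`, so the missing `ε = e^{-μ_k τ/2}` is paid for by
`e^{σ²/32}`. Powers of `|σ|` are absorbed by another factor `e^{σ²/32}`.
-/

open Topology Filter Asymptotics Set MeasureTheory

/-- `γ_k = 1/2 - 1/k`. -/
noncomputable def gam (k : ℕ) : ℝ := 1/2 - 1/(k:ℝ)

/-- `μ_k = k/2 - 1`. -/
noncomputable def mu (k : ℕ) : ℝ := (k:ℝ)/2 - 1

/-- `N_loc(σ) = (2(n-1)v'(σ)² - v(σ)²)/(2(1+v(σ)))`. -/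
noncomputable def Nloc (n : ℕ) (v : ℝ → ℝ) (σ : ℝ) : ℝ :=
  (2 * ((n:ℝ) - 1) * (deriv v σ)^2 - (v σ)^2) / (2 * (1 + v σ))

/-- `I(σ) = ∫₀^σ v''(s)/(1+v(s)) ds`. -/
noncomputable def Iop (v : ℝ → ℝ) (σ : ℝ) : ℝ :=
  ∫ s in (0:ℝ)..σ, deriv (deriv v) s / (1 + v s)

/-- The error term `G = (∂_τ - 𝒜)v̌ = η_τ(N_loc - n v' I) + (∂_τη_τ - η_τ'' + (σ/2)η_τ')v
- 2η_τ' v'`, where `η_τ(σ) = η(e^{-γ_k τ/5}σ)`. -/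
noncomputable def Gfun (n k : ℕ) (η v : ℝ → ℝ) (τ σ : ℝ) : ℝ :=
  η (Real.exp (-gam k * τ/5) * σ) * (Nloc n v σ - (n:ℝ) * deriv v σ * Iop v σ)
    + (deriv (fun t => η (Real.exp (-gam k * t/5) * σ)) τ
        - deriv (fun s => deriv (fun s' => η (Real.exp (-gam k * τ/5) * s')) s) σ
        + (σ/2) * deriv (fun s => η (Real.exp (-gam k * τ/5) * s)) σ) * v σ
    - 2 * deriv (fun s => η (Real.exp (-gam k * τ/5) * s)) σ * deriv v σ

lemma gam_pos {k : ℕ} (hk : 3 ≤ k) : 0 < gam k := by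
  have : (3:ℝ) ≤ k := by exact_mod_cast hk
  rw [gam, sub_pos, div_lt_div_iff₀ (by linarith) (by norm_num)]
  linarith

lemma gam_le_half (k : ℕ) : gam k ≤ 1/2 := by
  rw [gam]; linarith [one_div_nonneg.mpr (Nat.cast_nonneg (α := ℝ) k)]

lemma mu_pos {k : ℕ} (hk : 3 ≤ k) : 0 < mu k := by
  have : (3:ℝ) ≤ k := by exact_mod_cast hk
  rw [mu]; linarith

lemma deriv_eq_zero_of_eqOn_const {f : ℝ → ℝ} {U : Set ℝ} {c x : ℝ} (hU : IsOpen U)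
    (hf : EqOn f (fun _ => c) U) (hx : x ∈ U) : deriv f x = 0 := by
  rw [(Filter.eventuallyEq_of_mem (hU.mem_nhds hx) hf).deriv_eq, deriv_const]

lemma deriv_deriv_eq_zero_of_eqOn_const {f : ℝ → ℝ} {U : Set ℝ} {c x : ℝ} (hU : IsOpen U)
    (hf : EqOn f (fun _ => c) U) (hx : x ∈ U) : deriv (deriv f) x = 0 :=
  deriv_eq_zero_of_eqOn_const hU (fun _ hy => deriv_eq_zero_of_eqOn_const hU hf hy) hx

section Cutoff

variable {η : ℝ → ℝ}

lemma cutoff_derivs_eq_zero (hη1 : ∀ y : ℝ, |y| ≤ 1 → η y = 1)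
    (hη0 : ∀ y : ℝ, 6/5 ≤ |y| → η y = 0) {y : ℝ} (hy : |y| < 1 ∨ 6/5 < |y|) :
    deriv η y = 0 ∧ deriv (deriv η) y = 0 := by
  rcases hy with hy | hy
  · have hU : IsOpen {y : ℝ | |y| < 1} := isOpen_lt continuous_abs continuous_const
    have hf : EqOn η (fun _ => 1) {y : ℝ | |y| < 1} := fun z hz => hη1 z (le_of_lt hz)
    exact ⟨deriv_eq_zero_of_eqOn_const hU hf hy, deriv_deriv_eq_zero_of_eqOn_const hU hf hy⟩
  · have hU : IsOpen {y : ℝ | 6/5 < |y|} := isOpen_lt continuous_const continuous_abs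
    have hf : EqOn η (fun _ => 0) {y : ℝ | 6/5 < |y|} := fun z hz => hη0 z (le_of_lt hz)
    exact ⟨deriv_eq_zero_of_eqOn_const hU hf hy, deriv_deriv_eq_zero_of_eqOn_const hU hf hy⟩

lemma exists_abs_deriv_le_of_hasCompactSupport (hη : ContDiff ℝ 2 η)
    (hs : HasCompactSupport η) :
    ∃ M, ∀ y, |deriv η y| ≤ M ∧ |deriv (deriv η) y| ≤ M := by
  have h1 : ContDiff ℝ 1 (deriv η) := (contDiff_succ_iff_deriv.mp hη).2.2
  obtain ⟨M₁, hM₁⟩ := hs.deriv.exists_bound_of_continuous h1.continuous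
  obtain ⟨M₂, hM₂⟩ := hs.deriv.deriv.exists_bound_of_continuous
    (h1.continuous_deriv le_rfl)
  exact ⟨max M₁ M₂, fun y => ⟨(hM₁ y).trans (le_max_left _ _), (hM₂ y).trans (le_max_right _ _)⟩⟩

lemma deriv_deriv_comp_const_mul (a σ : ℝ) :
    deriv (fun s => deriv (fun s' => η (a * s')) s) σ = a ^ 2 * deriv (deriv η) (a * σ) := by
  simp only [deriv_comp_mul_left, smul_eq_mul, deriv_const_mul_field', sq, mul_assoc]

lemma hasDerivAt_cutoff_time (hη : Differentiable ℝ η) (g σ τ : ℝ) :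
    HasDerivAt (fun t => η (Real.exp (-g * t/5) * σ))
      (deriv η (Real.exp (-g * τ/5) * σ) * (-g/5 * Real.exp (-g * τ/5) * σ)) τ := by
  have h : HasDerivAt (fun t : ℝ => -g * t / 5) (-g/5) τ := by
    simpa using ((hasDerivAt_id τ).const_mul (-g)).div_const 5
  have := (hη _).hasDerivAt.comp τ (h.exp.mul_const σ)
  simpa [Function.comp_def, mul_comm, mul_left_comm, mul_assoc] using this

lemma Gfun_eq (hη : Differentiable ℝ η) (n k : ℕ) (v : ℝ → ℝ) (τ σ : ℝ) :
    Gfun n k η v τ σ =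
      η (Real.exp (-gam k * τ/5) * σ) * (Nloc n v σ - n * deriv v σ * Iop v σ)
      + (deriv η (Real.exp (-gam k * τ/5) * σ) * (-gam k/5 * Real.exp (-gam k * τ/5) * σ)
          - Real.exp (-gam k * τ/5) ^ 2 * deriv (deriv η) (Real.exp (-gam k * τ/5) * σ)
          + σ/2 * (Real.exp (-gam k * τ/5) * deriv η (Real.exp (-gam k * τ/5) * σ))) * v σ
      - 2 * (Real.exp (-gam k * τ/5) * deriv η (Real.exp (-gam k * τ/5) * σ)) * deriv v σ := by
  rw [Gfun, (hasDerivAt_cutoff_time hη (gam k) σ τ).deriv, deriv_deriv_comp_const_mul,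
    deriv_comp_mul_left, smul_eq_mul]

lemma Gfun_eq_of_flat (hη : Differentiable ℝ η) (hη1 : ∀ y : ℝ, |y| ≤ 1 → η y = 1)
    (hη0 : ∀ y : ℝ, 6/5 ≤ |y| → η y = 0) {n k : ℕ} {v : ℝ → ℝ} {τ σ : ℝ}
    (hσ : |Real.exp (-gam k * τ/5) * σ| < 1 ∨ 6/5 < |Real.exp (-gam k * τ/5) * σ|) :
    Gfun n k η v τ σ =
      η (Real.exp (-gam k * τ/5) * σ) * (Nloc n v σ - n * deriv v σ * Iop v σ) := by
  obtain ⟨h1, h2⟩ := cutoff_derivs_eq_zero hη1 hη0 hσ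
  rw [Gfun_eq hη, h1, h2]
  ring

lemma abs_Gfun_le (hη : Differentiable ℝ η) (hηrange : ∀ y : ℝ, η y ∈ Set.Icc (0:ℝ) 1)
    {M : ℝ} (hM : ∀ y, |deriv η y| ≤ M ∧ |deriv (deriv η) y| ≤ M)
    {n k : ℕ} {v : ℝ → ℝ} {τ σ : ℝ} (hγ : 0 ≤ gam k) (hτ : 0 ≤ τ) (hσ : 1 ≤ |σ|) :
    |Gfun n k η v τ σ| ≤ |Nloc n v σ - n * deriv v σ * Iop v σ|
      + 3 * M * |σ| * |v σ| + 2 * M * |deriv v σ| := by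
  set a := Real.exp (-gam k * τ/5)
  have ha0 : 0 < a := Real.exp_pos _
  have ha1 : a ≤ 1 := Real.exp_le_one_iff.mpr (by nlinarith)
  obtain ⟨hM1, hM2⟩ := hM (a * σ)
  have hη1 : |η (a * σ)| ≤ 1 := abs_le.mpr ⟨by linarith [(hηrange (a * σ)).1], (hηrange _).2⟩
  have hd1 : |a * deriv η (a * σ)| ≤ M := by
    rw [abs_mul, abs_of_pos ha0]; nlinarith [abs_nonneg (deriv η (a * σ))]
  have hd2 : |a ^ 2 * deriv (deriv η) (a * σ)| ≤ M := by
    rw [abs_mul, abs_of_pos (by positivity)]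
    nlinarith [abs_nonneg (deriv (deriv η) (a * σ)), pow_le_one₀ ha0.le ha1 (n := 2)]
  have hM0 : 0 ≤ M := (abs_nonneg _).trans hM1
  have hdτ : |deriv η (a * σ) * (-gam k/5 * a * σ)| ≤ M * |σ| := by
    have hγa : gam k / 5 * a ≤ 1 := by nlinarith [gam_le_half k]
    rw [abs_mul, abs_mul, abs_mul, abs_of_pos ha0, abs_div, abs_neg, abs_of_nonneg hγ,
      abs_of_pos (by norm_num : (0:ℝ) < 5)]
    calc _ ≤ M * (1 * |σ|) :=
          mul_le_mul hM1 (mul_le_mul_of_nonneg_right hγa (abs_nonneg σ)) (by positivity) hM0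
      _ = M * |σ| := by ring
  have hcoef : |deriv η (a * σ) * (-gam k/5 * a * σ) - a ^ 2 * deriv (deriv η) (a * σ)
      + σ/2 * (a * deriv η (a * σ))| ≤ 3 * M * |σ| := by
    have h := abs_add_le (deriv η (a * σ) * (-gam k/5 * a * σ) - a ^ 2 * deriv (deriv η) (a * σ))
      (σ/2 * (a * deriv η (a * σ)))
    have h' := abs_sub (deriv η (a * σ) * (-gam k/5 * a * σ)) (a ^ 2 * deriv (deriv η) (a * σ))
    rw [abs_mul (σ/2), abs_div, abs_two] at h
    nlinarith [abs_nonneg σ]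
  rw [Gfun_eq hη]
  calc _ ≤ |η (a * σ)| * |Nloc n v σ - n * deriv v σ * Iop v σ|
        + |deriv η (a * σ) * (-gam k/5 * a * σ) - a ^ 2 * deriv (deriv η) (a * σ)
          + σ/2 * (a * deriv η (a * σ))| * |v σ|
        + 2 * |a * deriv η (a * σ)| * |deriv v σ| := by
        refine (abs_sub _ _).trans ?_
        rw [abs_mul, abs_mul, abs_mul, abs_two]
        gcongr
        exact (abs_add_le _ _).trans (by rw [abs_mul, abs_mul])
    _ ≤ _ := by
      gcongr
      exact mul_le_of_le_one_left (abs_nonneg _) hη1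

end Cutoff

lemma abs_Nloc_le {n : ℕ} {v : ℝ → ℝ} {σ : ℝ} (hn : 1 ≤ n) (hpos : 1/2 ≤ 1 + v σ) :
    |Nloc n v σ| ≤ 2 * n * deriv v σ ^ 2 + v σ ^ 2 := by
  have hn1 : (1:ℝ) ≤ n := by exact_mod_cast hn
  have h2 : (0:ℝ) < 2 * (1 + v σ) := by linarith
  rw [Nloc, abs_div, abs_of_pos h2, div_le_iff₀ h2]
  have h : |2 * ((n:ℝ) - 1) * deriv v σ ^ 2 - v σ ^ 2| ≤ 2 * n * deriv v σ ^ 2 + v σ ^ 2 := by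
    rw [abs_le]; constructor <;> nlinarith [sq_nonneg (deriv v σ), sq_nonneg (v σ)]
  have hA : 0 ≤ 2 * n * deriv v σ ^ 2 + v σ ^ 2 := by positivity
  nlinarith [mul_le_mul_of_nonneg_left (show 1 ≤ 2 * (1 + v σ) by linarith) hA]

section RiccatiIntegral

variable {v : ℝ → ℝ} {U : Set ℝ}

lemma hasDerivAt_deriv_div_one_add (hU : IsOpen U) (hv : ContDiffOn ℝ 2 v U) {x : ℝ}
    (hx : x ∈ U) (h1 : 1 + v x ≠ 0) :
    HasDerivAt (fun y => deriv v y / (1 + v y))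
      (deriv (deriv v) x / (1 + v x) - (deriv v x / (1 + v x)) ^ 2) x := by
  have hd1 : HasDerivAt v (deriv v x) x :=
    ((hv.differentiableOn (by norm_num)).differentiableAt (hU.mem_nhds hx)).hasDerivAt
  have h2 : ContDiffOn ℝ 1 (deriv v) U := hv.deriv_of_isOpen hU (by norm_num)
  have hd2 : HasDerivAt (deriv v) (deriv (deriv v) x) x :=
    ((h2.differentiableOn (by norm_num)).differentiableAt (hU.mem_nhds hx)).hasDerivAt
  refine (hd2.div (hd1.const_add 1) h1).congr_deriv ?_
  field_simp

/-- Writing `w = v'/(1+v)`, one has `v''/(1+v) = w' + w²`, so the integral is controlled by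
the endpoint values of `w` and the length of the interval. -/
lemma integral_deriv_deriv_div_one_add_le (hU : IsOpen U) (hv : ContDiffOn ℝ 2 v U)
    {p q B : ℝ} (hsub : uIcc p q ⊆ U) (hpos : ∀ s ∈ uIcc p q, 1/2 ≤ 1 + v s)
    (hB : ∀ s ∈ uIcc p q, |deriv v s| ≤ B) :
    IntervalIntegrable (fun s => deriv (deriv v) s / (1 + v s)) volume p q ∧
      |∫ s in p..q, deriv (deriv v) s / (1 + v s)| ≤ 4 * B + 4 * B ^ 2 * |q - p| := by
  set w := fun y => deriv v y / (1 + v y)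
  have hne : ∀ s ∈ uIcc p q, 1 + v s ≠ 0 := fun s hs => by linarith [hpos s hs]
  have h2 : ContDiffOn ℝ 1 (deriv v) U := hv.deriv_of_isOpen hU (by norm_num)
  have hcv : ContinuousOn (fun s => 1 + v s) (uIcc p q) :=
    continuousOn_const.add (hv.continuousOn.mono hsub)
  have hw : ContinuousOn w (uIcc p q) := (h2.continuousOn.mono hsub).div hcv hne
  have hf : IntervalIntegrable (fun s => deriv (deriv v) s / (1 + v s)) volume p q :=
    ((h2.continuousOn_deriv_of_isOpen hU le_rfl).mono hsub |>.div hcv hne).intervalIntegrable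
  have hw2 : IntervalIntegrable (fun s => w s ^ 2) volume p q := (hw.pow 2).intervalIntegrable
  have hwB : ∀ s ∈ uIcc p q, |w s| ≤ 2 * B := fun s hs => by
    have := hpos s hs
    have h1 : (0:ℝ) < 1 + v s := by linarith
    rw [abs_div, abs_of_pos h1, div_le_iff₀ h1]
    nlinarith [hB s hs, abs_nonneg (deriv v s)]
  have hsplit : ∫ s in p..q, deriv (deriv v) s / (1 + v s)
      = (w q - w p) + ∫ s in p..q, w s ^ 2 := by
    rw [← intervalIntegral.integral_eq_sub_of_hasDerivAt
      (fun x hx => hasDerivAt_deriv_div_one_add hU hv (hsub hx) (hne x hx)) (hf.sub hw2),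
      ← intervalIntegral.integral_add (hf.sub hw2) hw2]
    simp
  have hsq : |∫ s in p..q, w s ^ 2| ≤ 4 * B ^ 2 * |q - p| := by
    have := intervalIntegral.norm_integral_le_of_norm_le_const (a := p) (b := q)
      (f := fun s => w s ^ 2) (C := 4 * B ^ 2) fun s hs => by
        rw [Real.norm_eq_abs, abs_pow]
        nlinarith [hwB s (uIoc_subset_uIcc hs), abs_nonneg (w s)]
    simpa using this
  refine ⟨hf, ?_⟩
  rw [hsplit]
  have := hwB q right_mem_uIcc
  have := hwB p left_mem_uIcc
  calc _ ≤ |w q| + |w p| + |∫ s in p..q, w s ^ 2| :=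
        (abs_add_le _ _).trans (by gcongr; exact abs_sub _ _)
    _ ≤ _ := by linarith

end RiccatiIntegral

/-- If `v''/(1+v)` is not integrable on `[0, p]`, it is not integrable on the larger `[0, q]`
either, and then `Iop v q` is the junk value `0`. -/
lemma abs_Iop_le_add {v : ℝ → ℝ} {p q : ℝ}
    (hpq : IntervalIntegrable (fun s => deriv (deriv v) s / (1 + v s)) volume p q)
    (hsub : uIcc 0 p ⊆ uIcc 0 q) :
    |Iop v q| ≤ |Iop v p| + |∫ s in p..q, deriv (deriv v) s / (1 + v s)| := by
  by_cases h0p : IntervalIntegrable (fun s => deriv (deriv v) s / (1 + v s)) volume 0 p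
  · rw [Iop, Iop, ← intervalIntegral.integral_add_adjacent_intervals h0p hpq]
    exact abs_add_le _ _
  · have h0q : ¬ IntervalIntegrable (fun s => deriv (deriv v) s / (1 + v s)) volume 0 q :=
      fun h => h0p (h.mono_set hsub)
    rw [Iop, intervalIntegral.integral_undef h0q, abs_zero]
    positivity

lemma exists_abs_eq_same_side {P σ : ℝ} (hP : 0 ≤ P) (hσ : P ≤ |σ|) :
    ∃ p : ℝ, |p| = P ∧ (∀ s ∈ uIcc p σ, P ≤ |s| ∧ |s| ≤ |σ|) ∧ uIcc 0 p ⊆ uIcc 0 σ := by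
  rcases le_or_gt 0 σ with h | h
  · rw [abs_of_nonneg h] at hσ
    refine ⟨P, abs_of_nonneg hP, fun s hs => ?_, uIcc_subset_uIcc left_mem_uIcc ?_⟩
    · rw [uIcc_of_le hσ] at hs
      rw [abs_of_nonneg (hP.trans hs.1), abs_of_nonneg h]
      exact hs
    · rw [uIcc_of_le h]; exact ⟨hP, hσ⟩
  · rw [abs_of_neg h] at hσ
    refine ⟨-P, by rw [abs_neg, abs_of_nonneg hP], fun s hs => ?_,
      uIcc_subset_uIcc left_mem_uIcc ?_⟩
    · rw [uIcc_of_ge (by linarith)] at hs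
      rw [abs_of_nonpos (by linarith [hs.2]), abs_of_neg h]
      exact ⟨by linarith [hs.2], by linarith [hs.1]⟩
    · rw [uIcc_of_ge h.le]; exact ⟨by linarith, by linarith⟩

lemma exists_abs_pow_le_mul_exp (j : ℕ) {c : ℝ} (hc : 0 < c) :
    ∃ C, 0 ≤ C ∧ ∀ x : ℝ, |x| ^ j ≤ C * Real.exp (c * x ^ 2) := by
  refine ⟨1 + j.factorial / c ^ j, by positivity, fun x => ?_⟩
  have hexp : 1 ≤ Real.exp (c * x ^ 2) := Real.one_le_exp (by positivity)
  have hfac : (c * x ^ 2) ^ j / j.factorial ≤ Real.exp (c * x ^ 2) :=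
    Real.pow_div_factorial_le_exp (x := c * x ^ 2) (by positivity) j
  have hpow : |x| ^ (2 * j) ≤ j.factorial / c ^ j * Real.exp (c * x ^ 2) := by
    rw [pow_mul, sq_abs, div_mul_eq_mul_div, le_div_iff₀ (by positivity)]
    rw [div_le_iff₀ (by positivity), mul_pow] at hfac
    linarith
  have hsplit : |x| ^ j ≤ 1 + |x| ^ (2 * j) := by
    rcases le_or_gt |x| 1 with h | h
    · linarith [pow_le_one₀ (abs_nonneg x) h (n := j), pow_nonneg (abs_nonneg x) (2 * j)]
    · linarith [pow_le_pow_right₀ h.le (show j ≤ 2 * j by omega)]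
  nlinarith

lemma sqrt_integral_sq_mul_gaussian_le {G : ℝ → ℝ} {A : ℝ} (hA : 0 ≤ A)
    (hG : ∀ᵐ σ, |G σ| ≤ A * Real.exp (σ ^ 2 / 16)) :
    √(∫ σ, G σ ^ 2 * Real.exp (-σ ^ 2 / 4)) ≤ 3 * A := by
  have hpt : ∀ᵐ σ, G σ ^ 2 * Real.exp (-σ ^ 2 / 4) ≤ A ^ 2 * Real.exp (-(1/8) * σ ^ 2) := by
    filter_upwards [hG] with σ hσ
    have hsq : G σ ^ 2 ≤ (A * Real.exp (σ ^ 2 / 16)) ^ 2 := by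
      rw [← sq_abs]; exact pow_le_pow_left₀ (abs_nonneg _) hσ 2
    calc G σ ^ 2 * Real.exp (-σ ^ 2 / 4)
        ≤ (A * Real.exp (σ ^ 2 / 16)) ^ 2 * Real.exp (-σ ^ 2 / 4) := by gcongr
      _ = A ^ 2 * Real.exp (-(1/8) * σ ^ 2) := by
        rw [mul_pow, ← Real.exp_nat_mul, mul_assoc, ← Real.exp_add]; ring_nf
  have hint : ∫ σ, G σ ^ 2 * Real.exp (-σ ^ 2 / 4) ≤ A ^ 2 * √(Real.pi / (1/8)) := by
    rw [← integral_gaussian, ← integral_const_mul]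
    exact integral_mono_of_nonneg (.of_forall fun σ => by positivity)
      ((integrable_exp_neg_mul_sq (by norm_num)).const_mul _) hpt
  have hpi : √(Real.pi / (1/8)) ≤ 9 := by
    rw [show (9:ℝ) = √(9 ^ 2) by rw [Real.sqrt_sq (by norm_num)]]
    exact Real.sqrt_le_sqrt (by linarith [Real.pi_le_four])
  calc √(∫ σ, G σ ^ 2 * Real.exp (-σ ^ 2 / 4)) ≤ √((3 * A) ^ 2) :=
        Real.sqrt_le_sqrt (hint.trans (by nlinarith [sq_nonneg A]))
    _ = 3 * A := Real.sqrt_sq (by positivity)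

/-- Hypothesis (ii) of the theorem on `P ≤ |s| < L`, with `e^{-μ_k τ}` written as `ε²`. -/
structure GrowthBounds (k : ℕ) (v : ℝ → ℝ) (P L ε Cp Cm' Cp' : ℝ) : Prop where
  half_le_one_add : ∀ s, P ≤ |s| → |s| < L → 1/2 ≤ 1 + v s
  abs_le : ∀ s, P ≤ |s| → |s| < L → |v s| ≤ Cp * |s| ^ k * ε ^ 2
  le_abs_deriv : ∀ s, P ≤ |s| → |s| < L → Cm' * |s| ^ (k - 1) * ε ^ 2 ≤ |deriv v s|
  abs_deriv_le : ∀ s, P ≤ |s| → |s| < L → |deriv v s| ≤ Cp' * |s| ^ (k - 1) * ε ^ 2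

namespace GrowthBounds

variable {k n : ℕ} {v : ℝ → ℝ} {P L ε Cp Cm' Cp' : ℝ}

lemma abs_deriv_le_pow (hg : GrowthBounds k v P L ε Cp Cm' Cp') (hP : 1 ≤ P) (hCp' : 0 ≤ Cp')
    {s R : ℝ} (hs : P ≤ |s|) (hsL : |s| < L) (hsR : |s| ≤ R) :
    |deriv v s| ≤ Cp' * R ^ k * ε ^ 2 := by
  refine (hg.abs_deriv_le s hs hsL).trans ?_
  have h1 : 1 ≤ |s| := hP.trans hs
  gcongr
  exact (pow_le_pow_right₀ h1 (Nat.sub_le k 1)).trans (pow_le_pow_left₀ (by linarith) hsR k)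

lemma abs_Nloc_le (hg : GrowthBounds k v P L ε Cp Cm' Cp') (hn : 1 ≤ n) (hP : 1 ≤ P)
    (hCp' : 0 ≤ Cp') {s : ℝ} (hs : P ≤ |s|) (hsL : |s| < L) :
    |Nloc n v s| ≤ (2 * n * Cp' ^ 2 + Cp ^ 2) * |s| ^ (2 * k) * ε ^ 4 := by
  have hv := hg.abs_le s hs hsL
  have hv' := hg.abs_deriv_le_pow hP hCp' hs hsL le_rfl
  have h1 : v s ^ 2 ≤ (Cp * |s| ^ k * ε ^ 2) ^ 2 := by
    rw [← sq_abs]; exact pow_le_pow_left₀ (abs_nonneg _) hv 2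
  have h2 : deriv v s ^ 2 ≤ (Cp' * |s| ^ k * ε ^ 2) ^ 2 := by
    rw [← sq_abs]; exact pow_le_pow_left₀ (abs_nonneg _) hv' 2
  calc |Nloc n v s| ≤ 2 * n * deriv v s ^ 2 + v s ^ 2 :=
        _root_.abs_Nloc_le hn (hg.half_le_one_add s hs hsL)
    _ ≤ 2 * n * (Cp' * |s| ^ k * ε ^ 2) ^ 2 + (Cp * |s| ^ k * ε ^ 2) ^ 2 := by gcongr
    _ = _ := by ring

lemma abs_Iop_endpoint_le (hg : GrowthBounds k v P L ε Cp Cm' Cp') (hn : 1 ≤ n) (hP : 1 ≤ P)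
    (hε : 0 < ε) (hε1 : ε ≤ 1) (hCp' : 0 ≤ Cp') (hCm' : 0 < Cm') {C0 p : ℝ}
    (hp : |p| = P) (hpL : P < L) (hi : |Nloc n v p - n * deriv v p * Iop v p| ≤ C0 * ε ^ 3) :
    |Iop v p| ≤ (C0 + (2 * n * Cp' ^ 2 + Cp ^ 2) * P ^ (2 * k)) / (n * Cm') * ε := by
  have hN := hg.abs_Nloc_le hn hP hCp' hp.ge (hp ▸ hpL)
  rw [hp] at hN
  have hlow : Cm' * ε ^ 2 ≤ |deriv v p| := by
    refine le_trans ?_ (hg.le_abs_deriv p hp.ge (hp ▸ hpL))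
    rw [hp]
    gcongr
    exact le_mul_of_one_le_right hCm'.le (one_le_pow₀ hP)
  have htri : n * |deriv v p| * |Iop v p| ≤ C0 * ε ^ 3 + |Nloc n v p| := by
    have := abs_sub_abs_le_abs_sub (n * deriv v p * Iop v p) (Nloc n v p)
    rw [abs_sub_comm, abs_mul, abs_mul, Nat.abs_cast] at this
    linarith
  have hε4 : ε ^ 4 ≤ ε ^ 3 := pow_le_pow_of_le_one hε.le hε1 (by norm_num)
  rw [div_mul_eq_mul_div, le_div_iff₀ (by positivity)]
  have : (n * Cm' * ε ^ 2) * |Iop v p|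
      ≤ (C0 + (2 * n * Cp' ^ 2 + Cp ^ 2) * P ^ (2 * k)) * ε ^ 3 := by
    have hK₁ : 0 ≤ (2 * n * Cp' ^ 2 + Cp ^ 2) * P ^ (2 * k) := by
      have : 0 ≤ P := by linarith
      positivity
    calc (n * Cm' * ε ^ 2) * |Iop v p| = n * (Cm' * ε ^ 2) * |Iop v p| := by ring
      _ ≤ n * |deriv v p| * |Iop v p| := by gcongr
      _ ≤ _ := by nlinarith [mul_le_mul_of_nonneg_left hε4 hK₁]
  nlinarith [abs_nonneg (Iop v p), pow_pos hε 2]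

lemma abs_Iop_le (hg : GrowthBounds k v P L ε Cp Cm' Cp') (hk : 1 ≤ k) (hP : 1 ≤ P) (hε : 0 < ε)
    (hε1 : ε ≤ 1) (hCp' : 0 ≤ Cp') (hv : ContDiffOn ℝ 2 v (Ioo (-L) L)) {D : ℝ} (hD : 0 ≤ D)
    (hI : ∀ p, |p| = P → |Iop v p| ≤ D * ε) {σ : ℝ} (hσ : P ≤ |σ|) (hσL : |σ| < L) :
    |Iop v σ| ≤ (D + 4 * Cp' + 8 * Cp' ^ 2) * |σ| ^ (3 * k) * ε := by
  obtain ⟨p, hp, hpσ, hsub0⟩ := exists_abs_eq_same_side (by linarith) hσ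
  have hsL : ∀ s ∈ uIcc p σ, |s| < L := fun s hs => (hpσ s hs).2.trans_lt hσL
  obtain ⟨hint, hbound⟩ := integral_deriv_deriv_div_one_add_le isOpen_Ioo hv
    (fun s hs => abs_lt.mp (hsL s hs))
    (fun s hs => hg.half_le_one_add s (hpσ s hs).1 (hsL s hs))
    (fun s hs => hg.abs_deriv_le_pow hP hCp' (hpσ s hs).1 (hsL s hs) (hpσ s hs).2)
  have hσ1 : 1 ≤ |σ| := hP.trans hσ
  have hσp : |σ - p| ≤ 2 * |σ| := (abs_sub _ _).trans (by rw [hp]; linarith)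
  set Q := |σ| ^ k
  have hQ : 1 ≤ Q := one_le_pow₀ hσ1
  have hσQ : |σ| ≤ Q := le_self_pow₀ hσ1 (by omega)
  have hε2 : ε ^ 2 ≤ ε := pow_le_of_le_one hε.le hε1 (by norm_num)
  have hε4 : ε ^ 4 ≤ ε := pow_le_of_le_one hε.le hε1 (by norm_num)
  have hQ3 : Q ≤ Q ^ 3 := le_self_pow₀ hQ (by norm_num)
  have hQ2σ : Q ^ 2 * |σ| ≤ Q ^ 3 :=
    (mul_le_mul_of_nonneg_left hσQ (by positivity)).trans_eq (by ring)
  calc |Iop v σ| ≤ |Iop v p| + |∫ s in p..σ, deriv (deriv v) s / (1 + v s)| :=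
        abs_Iop_le_add hint hsub0
    _ ≤ D * 1 * ε + 4 * Cp' * Q * ε ^ 2 + 8 * Cp' ^ 2 * (Q ^ 2 * |σ|) * ε ^ 4 := by
        have := hI p hp
        nlinarith [mul_le_mul_of_nonneg_left hσp (by positivity : 0 ≤ 4 * (Cp' * Q * ε ^ 2) ^ 2)]
    _ ≤ D * Q ^ 3 * ε + 4 * Cp' * Q ^ 3 * ε + 8 * Cp' ^ 2 * Q ^ 3 * ε := by
        gcongr
        exact one_le_pow₀ hQ
    _ = _ := by rw [← pow_mul, mul_comm k 3]; ring

end GrowthBounds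

lemma exists_abs_Nloc_sub_le {n k : ℕ} (hn : 1 ≤ n) (hk : 1 ≤ k) {P C0 Cp Cm' Cp' : ℝ}
    (hP : 1 ≤ P) (hC0 : 0 ≤ C0) (hCm' : 0 < Cm') (hCp' : 0 ≤ Cp') :
    ∃ K, 0 ≤ K ∧ ∀ {L ε : ℝ} {v : ℝ → ℝ}, 0 < ε → ε ≤ 1 → ContDiffOn ℝ 2 v (Ioo (-L) L) →
      GrowthBounds k v P L ε Cp Cm' Cp' →
      (∀ σ, |σ| ≤ P → |Nloc n v σ - n * deriv v σ * Iop v σ| ≤ C0 * ε ^ 3) →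
      ∀ σ, P ≤ |σ| → |σ| < L →
        |Nloc n v σ - n * deriv v σ * Iop v σ| ≤ K * |σ| ^ (4 * k) * ε ^ 3 := by
  set K₁ := 2 * n * Cp' ^ 2 + Cp ^ 2
  set D := (C0 + K₁ * P ^ (2 * k)) / (n * Cm')
  have hD : 0 ≤ D := by positivity
  refine ⟨K₁ + n * Cp' * (D + 4 * Cp' + 8 * Cp' ^ 2), by positivity,
    fun {L ε v} hε hε1 hv hg hi σ hσ hσL => ?_⟩
  have hI := hg.abs_Iop_le hk hP hε hε1 hCp' hv hD
    (fun p hp => hg.abs_Iop_endpoint_le hn hP hε hε1 hCp' hCm' hp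
      (hσ.trans_lt hσL) (hi p hp.le)) hσ hσL
  have hN := hg.abs_Nloc_le hn hP hCp' hσ hσL
  have hv' := hg.abs_deriv_le_pow hP hCp' hσ hσL le_rfl
  have hσ1 : 1 ≤ |σ| := hP.trans hσ
  have hpow : |σ| ^ (2 * k) * ε ^ 4 ≤ |σ| ^ (4 * k) * ε ^ 3 :=
    mul_le_mul (pow_le_pow_right₀ hσ1 (by omega))
      (pow_le_pow_of_le_one hε.le hε1 (by norm_num)) (by positivity) (by positivity)
  have htri : |Nloc n v σ - n * deriv v σ * Iop v σ|
      ≤ |Nloc n v σ| + n * (|deriv v σ| * |Iop v σ|) := by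
    refine (abs_sub _ _).trans_eq ?_
    rw [abs_mul, abs_mul, Nat.abs_cast, mul_assoc]
  calc _ ≤ K₁ * (|σ| ^ (2 * k) * ε ^ 4)
        + n * ((Cp' * |σ| ^ k * ε ^ 2) * ((D + 4 * Cp' + 8 * Cp' ^ 2) * |σ| ^ (3 * k) * ε)) := by
        refine htri.trans ?_
        gcongr
        exact hN.trans_eq (mul_assoc _ _ _)
    _ ≤ K₁ * (|σ| ^ (4 * k) * ε ^ 3)
        + n * ((Cp' * |σ| ^ k * ε ^ 2) * ((D + 4 * Cp' + 8 * Cp' ^ 2) * |σ| ^ (3 * k) * ε)) := by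
        gcongr
    _ = _ := by
        rw [show 4 * k = k + 3 * k by ring, pow_add]
        ring

section Pointwise

variable {η : ℝ → ℝ} {n k : ℕ} {v : ℝ → ℝ} {P L ε Cp Cm' Cp' M K τ σ : ℝ}

lemma abs_Gfun_le_of_annulus (hη : Differentiable ℝ η) (hηrange : ∀ y : ℝ, η y ∈ Set.Icc (0:ℝ) 1)
    (hM : ∀ y, |deriv η y| ≤ M ∧ |deriv (deriv η) y| ≤ M) (hγ : 0 ≤ gam k) (hτ : 0 ≤ τ)
    (hk : 1 ≤ k) (hg : GrowthBounds k v P L ε Cp Cm' Cp') (hP : 1 ≤ P) (hCp : 0 ≤ Cp)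
    (hCp' : 0 ≤ Cp') (hK : 0 ≤ K) (hε : 0 < ε) (hε1 : ε ≤ 1) (hσ : P ≤ |σ|) (hσL : |σ| < L)
    (hX : |Nloc n v σ - n * deriv v σ * Iop v σ| ≤ K * |σ| ^ (4 * k) * ε ^ 3) :
    |Gfun n k η v τ σ| ≤ (K + 3 * M * Cp + 2 * M * Cp') * |σ| ^ (4 * k) * ε ^ 2 := by
  have hσ1 : 1 ≤ |σ| := hP.trans hσ
  have hM0 : 0 ≤ M := (abs_nonneg _).trans (hM 0).1
  have hv := hg.abs_le σ hσ hσL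
  have hv' := hg.abs_deriv_le_pow hP hCp' hσ hσL le_rfl
  have hε3 : ε ^ 3 ≤ ε ^ 2 := pow_le_pow_of_le_one hε.le hε1 (by norm_num)
  have hk1 : |σ| ^ (k + 1) ≤ |σ| ^ (4 * k) := pow_le_pow_right₀ hσ1 (by omega)
  have hk0 : |σ| ^ k ≤ |σ| ^ (4 * k) := pow_le_pow_right₀ hσ1 (by omega)
  calc |Gfun n k η v τ σ|
      ≤ |Nloc n v σ - n * deriv v σ * Iop v σ| + 3 * M * |σ| * |v σ| + 2 * M * |deriv v σ| :=
        abs_Gfun_le hη hηrange hM hγ hτ hσ1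
    _ ≤ K * |σ| ^ (4 * k) * ε ^ 3 + 3 * M * |σ| * (Cp * |σ| ^ k * ε ^ 2)
        + 2 * M * (Cp' * |σ| ^ k * ε ^ 2) := by gcongr
    _ = K * |σ| ^ (4 * k) * ε ^ 3 + 3 * M * Cp * |σ| ^ (k + 1) * ε ^ 2
        + 2 * M * Cp' * |σ| ^ k * ε ^ 2 := by ring
    _ ≤ K * |σ| ^ (4 * k) * ε ^ 2 + 3 * M * Cp * |σ| ^ (4 * k) * ε ^ 2
        + 2 * M * Cp' * |σ| ^ (4 * k) * ε ^ 2 := by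
        gcongr
    _ = _ := by ring

lemma abs_exp_neg_mul (g τ σ : ℝ) :
    |Real.exp (-g * τ/5) * σ| = |σ| / Real.exp (g * τ/5) := by
  rw [abs_mul, abs_of_pos (Real.exp_pos _), neg_mul, neg_div, Real.exp_neg, inv_mul_eq_div]

lemma abs_Gfun_le_of_lt (hη : Differentiable ℝ η) (hηrange : ∀ y : ℝ, η y ∈ Set.Icc (0:ℝ) 1)
    (hη1 : ∀ y : ℝ, |y| ≤ 1 → η y = 1) (hη0 : ∀ y : ℝ, 6/5 ≤ |y| → η y = 0)
    (hM : ∀ y, |deriv η y| ≤ M ∧ |deriv (deriv η) y| ≤ M) (hγ : 0 ≤ gam k) (hτ : 0 ≤ τ)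
    (hk : 1 ≤ k) (hg : GrowthBounds k v P (6/5 * Real.exp (gam k * τ/5)) ε Cp Cm' Cp')
    (hP : 1 ≤ P) {C0 : ℝ} (hC0 : 0 ≤ C0) (hCp : 0 ≤ Cp) (hCp' : 0 ≤ Cp') (hK : 0 ≤ K)
    (hε : 0 < ε) (hε1 : ε ≤ 1) (hPτ : 2 * P ≤ Real.exp (gam k * τ/5))
    (hεσ : ∀ σ, Real.exp (gam k * τ/5) ≤ |σ| → ε ^ 2 ≤ ε ^ 3 * Real.exp (σ ^ 2 / 32))
    (hi : ∀ σ, |σ| ≤ P → |Nloc n v σ - n * deriv v σ * Iop v σ| ≤ C0 * ε ^ 3)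
    (hX : ∀ σ, P ≤ |σ| → |σ| < 6/5 * Real.exp (gam k * τ/5) →
      |Nloc n v σ - n * deriv v σ * Iop v σ| ≤ K * |σ| ^ (4 * k) * ε ^ 3)
    (hσL : |σ| < 6/5 * Real.exp (gam k * τ/5)) :
    |Gfun n k η v τ σ| ≤ C0 * ε ^ 3
      + (K + 3 * M * Cp + 2 * M * Cp') * |σ| ^ (4 * k) * (ε ^ 3 * Real.exp (σ ^ 2 / 32)) := by
  have hM0 : 0 ≤ M := (abs_nonneg _).trans (hM 0).1
  have hΛ := Real.exp_pos (gam k * τ/5)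
  have h32 : 1 ≤ Real.exp (σ ^ 2 / 32) := Real.one_le_exp (by positivity)
  by_cases hin : |Real.exp (-gam k * τ/5) * σ| < 1
  · rw [Gfun_eq_of_flat hη hη1 hη0 (Or.inl hin), abs_mul, hη1 _ hin.le, abs_one, one_mul]
    by_cases hσP : |σ| ≤ P
    · exact (hi σ hσP).trans (le_add_of_nonneg_right (by positivity))
    · refine (hX σ (not_le.mp hσP).le hσL).trans ((le_add_of_nonneg_left (by positivity)).trans' ?_)
      calc K * |σ| ^ (4 * k) * ε ^ 3 ≤ (K + 3 * M * Cp + 2 * M * Cp') * |σ| ^ (4 * k) * ε ^ 3 := by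
            gcongr; nlinarith [mul_nonneg hM0 hCp, mul_nonneg hM0 hCp']
        _ ≤ _ := by rw [← mul_assoc]; exact le_mul_of_one_le_right (by positivity) h32
  · rw [abs_exp_neg_mul, not_lt, le_div_iff₀ hΛ, one_mul] at hin
    have hσP : P ≤ |σ| := by linarith
    calc _ ≤ (K + 3 * M * Cp + 2 * M * Cp') * |σ| ^ (4 * k) * ε ^ 2 :=
          abs_Gfun_le_of_annulus hη hηrange hM hγ hτ hk hg hP hCp hCp' hK hε hε1 hσP hσL
            (hX σ hσP hσL)
      _ ≤ _ := le_add_of_nonneg_left (by positivity) |>.trans' (by gcongr; exact hεσ σ hin)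

lemma abs_Gfun_le_mul_exp (hη : Differentiable ℝ η) (hηrange : ∀ y : ℝ, η y ∈ Set.Icc (0:ℝ) 1)
    (hη1 : ∀ y : ℝ, |y| ≤ 1 → η y = 1) (hη0 : ∀ y : ℝ, 6/5 ≤ |y| → η y = 0)
    (hM : ∀ y, |deriv η y| ≤ M ∧ |deriv (deriv η) y| ≤ M) (hγ : 0 ≤ gam k) (hτ : 0 ≤ τ)
    (hk : 1 ≤ k) (hg : GrowthBounds k v P (6/5 * Real.exp (gam k * τ/5)) ε Cp Cm' Cp')
    (hP : 1 ≤ P) {C0 Cpoly : ℝ} (hC0 : 0 ≤ C0) (hCp : 0 ≤ Cp) (hCp' : 0 ≤ Cp') (hK : 0 ≤ K)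
    (hCpoly : 0 ≤ Cpoly) (hpoly : ∀ x : ℝ, |x| ^ (4 * k) ≤ Cpoly * Real.exp (x ^ 2 / 32))
    (hε : 0 < ε) (hε1 : ε ≤ 1) (hPτ : 2 * P ≤ Real.exp (gam k * τ/5))
    (hεσ : ∀ σ, Real.exp (gam k * τ/5) ≤ |σ| → ε ^ 2 ≤ ε ^ 3 * Real.exp (σ ^ 2 / 32))
    (hi : ∀ σ, |σ| ≤ P → |Nloc n v σ - n * deriv v σ * Iop v σ| ≤ C0 * ε ^ 3)
    (hX : ∀ σ, P ≤ |σ| → |σ| < 6/5 * Real.exp (gam k * τ/5) →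
      |Nloc n v σ - n * deriv v σ * Iop v σ| ≤ K * |σ| ^ (4 * k) * ε ^ 3)
    (hσ : |σ| ≠ 6/5 * Real.exp (gam k * τ/5)) :
    |Gfun n k η v τ σ|
      ≤ (C0 + (K + 3 * M * Cp + 2 * M * Cp') * Cpoly) * ε ^ 3 * Real.exp (σ ^ 2 / 16) := by
  have hM0 : 0 ≤ M := (abs_nonneg _).trans (hM 0).1
  have hΛ := Real.exp_pos (gam k * τ/5)
  by_cases hout : 6/5 < |Real.exp (-gam k * τ/5) * σ|
  · rw [Gfun_eq_of_flat hη hη1 hη0 (Or.inr hout), hη0 _ hout.le, zero_mul, abs_zero]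
    positivity
  have hσL : |σ| < 6/5 * Real.exp (gam k * τ/5) := by
    rw [abs_exp_neg_mul, not_lt, div_le_iff₀ hΛ] at hout
    exact lt_of_le_of_ne hout hσ
  have h16 : 1 ≤ Real.exp (σ ^ 2 / 16) := Real.one_le_exp (by positivity)
  calc _ ≤ C0 * ε ^ 3
        + (K + 3 * M * Cp + 2 * M * Cp') * |σ| ^ (4 * k) * (ε ^ 3 * Real.exp (σ ^ 2 / 32)) :=
        abs_Gfun_le_of_lt hη hηrange hη1 hη0 hM hγ hτ hk hg hP hC0 hCp hCp' hK hε hε1 hPτ hεσ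
          hi hX hσL
    _ ≤ C0 * ε ^ 3 * Real.exp (σ ^ 2 / 16) + (K + 3 * M * Cp + 2 * M * Cp')
        * (Cpoly * Real.exp (σ ^ 2 / 32)) * (ε ^ 3 * Real.exp (σ ^ 2 / 32)) := by
        refine add_le_add (le_mul_of_one_le_right (by positivity) h16) ?_
        gcongr
        exact hpoly σ
    _ = _ := by
        rw [show σ ^ 2 / 16 = σ ^ 2 / 32 + σ ^ 2 / 32 by ring, Real.exp_add]; ring

end Pointwise

lemma cutoff_hasCompactSupport {η : ℝ → ℝ} (hη0 : ∀ y : ℝ, 6/5 ≤ |y| → η y = 0) :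
    HasCompactSupport η :=
  HasCompactSupport.intro (isCompact_Icc (a := -(6/5)) (b := 6/5))
    fun y hy => hη0 y (not_le.mp fun h => hy (abs_le.mp h)).le

lemma growthBounds_of_exp_mul {k : ℕ} {v : ℝ → ℝ} {P L t Cm Cp Cm' Cp' : ℝ}
    (h : ∀ σ : ℝ, P ≤ |σ| → |σ| ≤ L →
      1/2 ≤ 1 + v σ ∧ Cm * |σ| ^ k ≤ Real.exp t * |v σ| ∧ Real.exp t * |v σ| ≤ Cp * |σ| ^ k ∧
      Cm' * |σ| ^ (k-1) ≤ Real.exp t * |deriv v σ| ∧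
      Real.exp t * |deriv v σ| ≤ Cp' * |σ| ^ (k-1)) :
    GrowthBounds k v P L (Real.exp (-t/2)) Cp Cm' Cp' := by
  have hε : Real.exp (-t/2) ^ 2 = (Real.exp t)⁻¹ := by
    rw [← Real.exp_nat_mul, ← Real.exp_neg]; ring_nf
  have hpos := Real.exp_pos t
  refine ⟨fun s hs hsL => (h s hs hsL.le).1, fun s hs hsL => ?_, fun s hs hsL => ?_,
    fun s hs hsL => ?_⟩
  · rw [hε, le_mul_inv_iff₀ hpos, mul_comm]; exact (h s hs hsL.le).2.2.1
  · rw [hε, mul_inv_le_iff₀ hpos, mul_comm _ (Real.exp t)]; exact (h s hs hsL.le).2.2.2.1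
  · rw [hε, le_mul_inv_iff₀ hpos, mul_comm]; exact (h s hs hsL.le).2.2.2.2

lemma sq_le_cube_mul_exp {t σ : ℝ} (h : 16 * t ≤ σ ^ 2) :
    Real.exp (-t/2) ^ 2 ≤ Real.exp (-t/2) ^ 3 * Real.exp (σ ^ 2 / 32) := by
  rw [← Real.exp_nat_mul, ← Real.exp_nat_mul, ← Real.exp_add, Real.exp_le_exp]
  push_cast
  linarith

lemma exists_time_large {γ : ℝ} (hγ : 0 < γ) {μ : ℝ} (hμ : 0 ≤ μ) (P : ℝ) :
    ∃ τ₁₀ : ℝ, ∀ τ, τ₁₀ ≤ τ → 0 ≤ τ ∧ 2 * P ≤ Real.exp (γ * τ/5) ∧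
      ∀ σ, Real.exp (γ * τ/5) ≤ |σ| →
        Real.exp (-(μ * τ)/2) ^ 2 ≤ Real.exp (-(μ * τ)/2) ^ 3 * Real.exp (σ ^ 2 / 32) := by
  refine ⟨max (10 * P / γ) (200 * μ / γ ^ 2), fun τ hτ => ?_⟩
  have h1 : 10 * P ≤ γ * τ := by
    have := (le_max_left _ _).trans hτ; rw [div_le_iff₀ hγ] at this; linarith
  have h2 : 200 * μ ≤ γ ^ 2 * τ := by
    have := (le_max_right _ _).trans hτ; rw [div_le_iff₀ (by positivity)] at this; linarith
  have hτ0 : 0 ≤ τ :=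
    (div_nonneg (by positivity) (by positivity)).trans ((le_max_right _ _).trans hτ)
  refine ⟨hτ0, by linarith [Real.add_one_le_exp (γ * τ/5)], fun σ hσ => sq_le_cube_mul_exp ?_⟩
  have hsq : Real.exp (γ * τ/5) ^ 2 ≤ σ ^ 2 :=
    (pow_le_pow_left₀ (Real.exp_pos _).le hσ 2).trans_eq (sq_abs σ)
  rw [← Real.exp_nat_mul] at hsq
  have := Real.quadratic_le_exp_of_nonneg (x := (2:ℕ) * (γ * τ/5)) (by positivity)
  push_cast at this hsq
  nlinarith [mul_le_mul_of_nonneg_left h2 hτ0]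

theorem stmt16_general (n k : ℕ) (hn : 2 ≤ n) (hk : 3 ≤ k)
    (η : ℝ → ℝ) (hηsmooth : ContDiff ℝ (⊤ : ℕ∞) η)
    (hηrange : ∀ y : ℝ, η y ∈ Set.Icc (0:ℝ) 1)
    (hη1 : ∀ y : ℝ, |y| ≤ 1 → η y = 1)
    (hη0 : ∀ y : ℝ, 6/5 ≤ |y| → η y = 0)
    (P : ℝ) (hP : 1 ≤ P)
    (C0hat Cm Cp Cm' Cp' : ℝ) (hC0hat : 0 < C0hat)
    (hCp : 0 < Cp) (hCm' : 0 < Cm') (hCp' : 0 < Cp') :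
    ∃ C₂ τ₁₀ : ℝ, ∀ τ : ℝ, τ₁₀ ≤ τ →
      ∀ v : ℝ → ℝ,
        ContDiffOn ℝ 2 v
          (Set.Icc (-(6/5 * Real.exp (gam k * τ/5))) (6/5 * Real.exp (gam k * τ/5))) →
        (∀ σ : ℝ, 6/5 * Real.exp (gam k * τ/5) < |σ| → v σ = 0) →
        (∀ σ : ℝ, |σ| ≤ P →
          |Nloc n v σ - (n:ℝ) * deriv v σ * Iop v σ|
            ≤ C0hat * Real.exp (-(3/2) * mu k * τ)) →
        (∀ σ : ℝ, P ≤ |σ| → |σ| ≤ 6/5 * Real.exp (gam k * τ/5) →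
          1/2 ≤ 1 + v σ ∧
          Cm * |σ|^k ≤ Real.exp (mu k * τ) * |v σ| ∧
          Real.exp (mu k * τ) * |v σ| ≤ Cp * |σ|^k ∧
          Cm' * |σ|^(k-1) ≤ Real.exp (mu k * τ) * |deriv v σ| ∧
          Real.exp (mu k * τ) * |deriv v σ| ≤ Cp' * |σ|^(k-1)) →
        Real.sqrt (∫ σ : ℝ, (Gfun n k η v τ σ)^2 * Real.exp (-σ^2/4))
          ≤ C₂ * Real.exp (-(3/2) * mu k * τ) := by
  have hk1 : 1 ≤ k := by omega
  have hηdiff : Differentiable ℝ η := hηsmooth.differentiable (by simp)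
  obtain ⟨M, hM⟩ := exists_abs_deriv_le_of_hasCompactSupport
    (hηsmooth.of_le (WithTop.coe_le_coe.mpr le_top)) (cutoff_hasCompactSupport hη0)
  obtain ⟨Cpoly, hCpoly, hpoly⟩ := exists_abs_pow_le_mul_exp (4 * k) (c := 1/32) (by norm_num)
  replace hpoly : ∀ x : ℝ, |x| ^ (4 * k) ≤ Cpoly * Real.exp (x ^ 2 / 32) :=
    fun x => (hpoly x).trans_eq (by ring_nf)
  obtain ⟨K, hK, hX⟩ := exists_abs_Nloc_sub_le (n := n) (by omega) hk1 hP hC0hat.le hCm' hCp'.le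
  obtain ⟨τ₁₀, hτ₁₀⟩ := exists_time_large (gam_pos hk) (mu_pos hk).le P
  refine ⟨3 * (C0hat + (K + 3 * M * Cp + 2 * M * Cp') * Cpoly), τ₁₀,
    fun τ hτ v hv _ hi hii => ?_⟩
  obtain ⟨hτ0, hPτ, hεσ⟩ := hτ₁₀ τ hτ
  set ε := Real.exp (-(mu k * τ)/2)
  have hε3 : Real.exp (-(3/2) * mu k * τ) = ε ^ 3 := by
    rw [← Real.exp_nat_mul]; ring_nf
  rw [hε3] at hi ⊢
  have hε1 : ε ≤ 1 := Real.exp_le_one_iff.mpr (by nlinarith [mu_pos hk])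
  have hg := growthBounds_of_exp_mul hii
  have hM0 : 0 ≤ M := (abs_nonneg _).trans (hM 0).1
  rw [mul_assoc]
  refine sqrt_integral_sq_mul_gaussian_le (by positivity) ?_
  filter_upwards [Measure.ae_ne volume (6/5 * Real.exp (gam k * τ/5)),
    Measure.ae_ne volume (-(6/5 * Real.exp (gam k * τ/5)))] with σ h₁ h₂
  have hσ : |σ| ≠ 6/5 * Real.exp (gam k * τ/5) := fun h => by
    rcases abs_eq (by positivity) |>.mp h with h | h <;> contradiction
  refine (abs_Gfun_le_mul_exp hηdiff hηrange hη1 hη0 hM (gam_pos hk).le hτ0 hk1 hg hP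
    hC0hat.le hCp.le hCp'.le hK hCpoly hpoly (Real.exp_pos _) hε1 hPτ hεσ hi
    (hX (Real.exp_pos _) hε1 (hv.mono Ioo_subset_Icc_self) hg hi) hσ).trans_eq (by ring)

/-- the weighted `L²` bound `∥(∂_τ - 𝒜)v̌∥_𝔥 ≤ C₂ e^{-(3/2)μ_k τ}`. -/
theorem stmt16 (n k : ℕ) (hn : 2 ≤ n) (hk : 3 ≤ k)
    (η : ℝ → ℝ) (hηsmooth : ContDiff ℝ (⊤ : ℕ∞) η)
    (hηeven : ∀ y : ℝ, η (-y) = η y)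
    (hηrange : ∀ y : ℝ, η y ∈ Set.Icc (0:ℝ) 1)
    (hη1 : ∀ y : ℝ, |y| ≤ 1 → η y = 1)
    (hη0 : ∀ y : ℝ, 6/5 ≤ |y| → η y = 0)
    (P : ℝ) (hP : 1 ≤ P)
    (C0hat Cm Cp Cm' Cp' : ℝ) (hC0hat : 0 < C0hat)
    (hCm : 0 < Cm) (hCp : 0 < Cp) (hCm' : 0 < Cm') (hCp' : 0 < Cp') :
    ∃ C₂ τ₁₀ : ℝ, ∀ τ : ℝ, τ₁₀ ≤ τ →
      ∀ v : ℝ → ℝ,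
        ContDiffOn ℝ 2 v
          (Set.Icc (-(6/5 * Real.exp (gam k * τ/5))) (6/5 * Real.exp (gam k * τ/5))) →
        (∀ σ : ℝ, 6/5 * Real.exp (gam k * τ/5) < |σ| → v σ = 0) →
        (∀ σ : ℝ, |σ| ≤ P →
          |Nloc n v σ - (n:ℝ) * deriv v σ * Iop v σ|
            ≤ C0hat * Real.exp (-(3/2) * mu k * τ)) →
        (∀ σ : ℝ, P ≤ |σ| → |σ| ≤ 6/5 * Real.exp (gam k * τ/5) →
          1/2 ≤ 1 + v σ ∧
          Cm * |σ|^k ≤ Real.exp (mu k * τ) * |v σ| ∧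
          Real.exp (mu k * τ) * |v σ| ≤ Cp * |σ|^k ∧
          Cm' * |σ|^(k-1) ≤ Real.exp (mu k * τ) * |deriv v σ| ∧
          Real.exp (mu k * τ) * |deriv v σ| ≤ Cp' * |σ|^(k-1)) →
        Real.sqrt (∫ σ : ℝ, (Gfun n k η v τ σ)^2 * Real.exp (-σ^2/4))
          ≤ C₂ * Real.exp (-(3/2) * mu k * τ) :=
  stmt16_general n k hn hk η hηsmooth hηrange hη1 hη0 P hP C0hat Cm Cp Cm' Cp' hC0hat hCp hCm' hCp'
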